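/- Let t > 0 be real, set z := t·√(1 + t/2), m² := 1/(2z), and u₁ := −m²·(2t + (3/4)t²). Define g₂(u) := (4/3)u² − 1 and g₃(u) := z/8 − u/3 + (8/27)u³. Then g₂(u₁) = t²(1 + 3t/4)²/(3z²) and g₃(u₁) = t³(1 + 3t/4)³/(27z³). In particular g₂(u₁)³ = 27·g₃(u₁)² (so the discriminant g₂³ − 27g₃² vanishes at u₁), and g₂(u₁)/(36·g₃(u₁)) = z/(4t(1 + 3t/4)). -/

import Mathlib

/-!
With `z² = t²(1 + t/2)` one finds `u₁ = -t(1 + 3t/8)/z`, and there the invariants take the form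
`g₂ = 12e²`, `g₃ = 8e³` with `e = t(1 + 3t/4)/(6z)`. These are exactly the invariants of the
degenerate cubic `4x³ - g₂x - g₃ = 4(x + e)²(x - 2e)`, which has the double root `-e`; the vanishing
of the discriminant and the value `g₂/(36 g₃) = 1/(24e)` follow at once.
-/

theorem weierstrass_g2_at_monopole {t z : ℝ} (hz : z ≠ 0) (hzsq : z ^ 2 = t ^ 2 * (1 + t / 2)) :
    (4 / 3) * (-(t * (1 + 3 * t / 8)) / z) ^ 2 - 1 = 12 * (t * (1 + 3 * t / 4) / (6 * z)) ^ 2 := by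
  field_simp
  linear_combination (-110592) * hzsq

theorem weierstrass_g3_at_monopole {t z : ℝ} (hz : z ≠ 0) (hzsq : z ^ 2 = t ^ 2 * (1 + t / 2)) :
    z / 8 - (-(t * (1 + 3 * t / 8)) / z) / 3 + (8 / 27) * (-(t * (1 + 3 * t / 8)) / z) ^ 3 =
      8 * (t * (1 + 3 * t / 4) / (6 * z)) ^ 3 := by
  field_simp
  linear_combination (8957952 * z ^ 2 + 23887872 * t + 17915904 * t ^ 2 + 4478976 * t ^ 3) * hzsq

theorem discriminant_eq_zero_of_double_root {g₂ g₃ e : ℝ} (h₂ : g₂ = 12 * e ^ 2)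
    (h₃ : g₃ = 8 * e ^ 3) : g₂ ^ 3 = 27 * g₃ ^ 2 := by
  rw [h₂, h₃]
  ring

theorem div_eq_of_double_root {g₂ g₃ e : ℝ} (he : e ≠ 0) (h₂ : g₂ = 12 * e ^ 2)
    (h₃ : g₃ = 8 * e ^ 3) : g₂ / (36 * g₃) = 1 / (24 * e) := by
  rw [h₂, h₃]
  field_simp
  ring

theorem stmt_2 (t z m2 u1 : ℝ) (ht : 0 < t)
    (hz : z = t * Real.sqrt (1 + t/2))
    (hm2 : m2 = 1/(2*z))
    (hu1 : u1 = -m2 * (2*t + (3/4)*t^2))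
    (g2 g3 : ℝ → ℝ)
    (hg2 : ∀ u, g2 u = (4/3)*u^2 - 1)
    (hg3 : ∀ u, g3 u = z/8 - u/3 + (8/27)*u^3) :
    g2 u1 = t^2*(1 + 3*t/4)^2/(3*z^2) ∧
    g3 u1 = t^3*(1 + 3*t/4)^3/(27*z^3) ∧
    g2 u1 ^ 3 = 27 * g3 u1 ^ 2 ∧
    g2 u1 / (36 * g3 u1) = z/(4*t*(1 + 3*t/4)) := by
  have hz0 : 0 < z := by rw [hz]; positivity
  have hzsq : z ^ 2 = t ^ 2 * (1 + t / 2) := by rw [hz, mul_pow, Real.sq_sqrt (by positivity)]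
  have hu : u1 = -(t * (1 + 3 * t / 8)) / z := by rw [hu1, hm2]; field_simp; ring
  set e := t * (1 + 3 * t / 4) / (6 * z) with he
  have h₂ : g2 u1 = 12 * e ^ 2 := by rw [hg2, hu, weierstrass_g2_at_monopole hz0.ne' hzsq]
  have h₃ : g3 u1 = 8 * e ^ 3 := by rw [hg3, hu, weierstrass_g3_at_monopole hz0.ne' hzsq]
  refine ⟨by rw [h₂, he]; field_simp; ring, by rw [h₃, he]; field_simp; ring,
    discriminant_eq_zero_of_double_root h₂ h₃, ?_⟩
  rw [div_eq_of_double_root (by positivity) h₂ h₃, he]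
  field_simp
  ring
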